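/- Let d = 2 and define L₀ : ℝ² → ℝ̄ by L₀(x) = sup_{y ∈ ℝ²} ( ⟨x,y⟩ − max_{l ∈ {0,1,2}} ( ‖y‖_(l) − l ) ). Then for every x = (x₁,x₂) ∈ ℝ² with x₁² + x₂² < 1 and |x₁| + |x₂| ≤ 1, one has L₀(x₁,x₂) = |x₁| + |x₂|. -/

import Mathlib

noncomputable section

variable {d : ℕ}

/-- The projection `x_K` of `x` onto the coordinates in `K`
(the components outside `K` vanish). -/
def restr (K : Finset (Fin d)) (x : EuclideanSpace ℝ (Fin d)) : EuclideanSpace ℝ (Fin d) :=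
  WithLp.toLp 2 (fun i => if i ∈ K then x i else 0)

/-- The 2-k-symmetric gauge norm `‖y‖_(k) = sup {‖y_K‖ : |K| ≤ k}`
(equal to `0` for `k = 0`, by the convention `‖·‖_(0) = 0`). -/
def gaugeNorm (k : ℕ) (y : EuclideanSpace ℝ (Fin d)) : ℝ :=
  ⨆ K : {K : Finset (Fin d) // K.card ≤ k}, ‖restr (K : Finset (Fin d)) y‖

/-- The ℓ₀ pseudonorm: the number of nonzero components. -/
def l0 (x : EuclideanSpace ℝ (Fin d)) : ℕ :=
  (Finset.univ.filter fun i => x i ≠ 0).card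

open Classical in
/-- The Capra coupling `¢(x,y) = ⟨x,y⟩ / ‖x‖` for `x ≠ 0`, and `¢(0,y) = 0`. -/
def capra (x y : EuclideanSpace ℝ (Fin d)) : ℝ :=
  if x = 0 then 0 else (inner ℝ x y : ℝ) / ‖x‖

/-- The Capra conjugate of ℓ₀: `y ↦ max_{0 ≤ l ≤ d} (‖y‖_(l) − l)`. -/
def capraConjL0 (y : EuclideanSpace ℝ (Fin d)) : ℝ :=
  ⨆ l : Fin (d + 1), (gaugeNorm (l : ℕ) y - ((l : ℕ) : ℝ))

/-- `L₀(x) = sup_y (⟨x,y⟩ − max_{0 ≤ l ≤ d}(‖y‖_(l) − l))`, with values in `ℝ̄ = EReal`. -/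
def L0 (x : EuclideanSpace ℝ (Fin d)) : EReal :=
  ⨆ y : EuclideanSpace ℝ (Fin d), (((inner ℝ x y : ℝ) - capraConjL0 y : ℝ) : EReal)

/-- The k-support norm: the dual norm of the 2-k-symmetric gauge norm,
`‖y‖^sp_(k) = sup {⟨x,y⟩ : ‖x‖_(k) ≤ 1}`. -/
def suppNorm (k : ℕ) (y : EuclideanSpace ℝ (Fin d)) : ℝ :=
  sSup {c : ℝ | ∃ x : EuclideanSpace ℝ (Fin d), gaugeNorm k x ≤ 1 ∧ c = (inner ℝ x y : ℝ)}

/-- The unit ball of the k-support norm, with the convention `B^sp_(0) = {0}`. -/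
def Bsp (d k : ℕ) : Set (EuclideanSpace ℝ (Fin d)) :=
  if k = 0 then {0} else {y | suppNorm k y ≤ 1}

/-- The degenerate unit sphere `S_K = {x : x_{−K} = 0 and ‖x_K‖ = 1}`. -/
def sphK (K : Finset (Fin d)) : Set (EuclideanSpace ℝ (Fin d)) :=
  {x | (∀ i, i ∉ K → x i = 0) ∧ ‖restr K x‖ = 1}

/-- The degenerate unit ball `B_K = {x : x_{−K} = 0 and ‖x_K‖ ≤ 1}`. -/
def ballK (K : Finset (Fin d)) : Set (EuclideanSpace ℝ (Fin d)) :=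
  {x | (∀ i, i ∉ K → x i = 0) ∧ ‖restr K x‖ ≤ 1}

/-! For every `y`, taking `l = 1` in the maximum gives `|yᵢ| ≤ 1 + c(y)`, where `c(y)` is the
conjugate `max_l (‖y‖_(l) − l) ≥ 0`; hence `⟨x, y⟩ ≤ ‖x‖₁ (1 + c(y)) ≤ ‖x‖₁ + c(y)` as soon as
`‖x‖₁ ≤ 1`. Conversely `y = sign x` has `⟨x, y⟩ = ‖x‖₁` and `‖y‖_(l) ≤ l` for every `l`, so
`c(y) = 0` and the bound is attained. -/

instance (k : ℕ) : Nonempty {K : Finset (Fin d) // K.card ≤ k} := ⟨⟨∅, by simp⟩⟩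

lemma restr_eq_sum_single (K : Finset (Fin d)) (y : EuclideanSpace ℝ (Fin d)) :
    restr K y = ∑ i ∈ K, EuclideanSpace.single i (y i) := by
  ext j
  simp [restr]

lemma norm_restr_singleton (i : Fin d) (y : EuclideanSpace ℝ (Fin d)) :
    ‖restr {i} y‖ = |y i| := by
  simp [restr_eq_sum_single]

lemma norm_restr_le_card {y : EuclideanSpace ℝ (Fin d)} (hy : ∀ i, |y i| ≤ 1)
    (K : Finset (Fin d)) : ‖restr K y‖ ≤ K.card := by
  rw [restr_eq_sum_single]
  calc ‖∑ i ∈ K, EuclideanSpace.single i (y i)‖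
      ≤ ∑ i ∈ K, ‖EuclideanSpace.single i (y i)‖ := norm_sum_le _ _
    _ ≤ ∑ _i ∈ K, (1 : ℝ) := Finset.sum_le_sum fun i _ => by simpa using hy i
    _ = K.card := by simp

lemma gaugeNorm_nonneg (k : ℕ) (y : EuclideanSpace ℝ (Fin d)) : 0 ≤ gaugeNorm k y :=
  Real.iSup_nonneg fun _ => norm_nonneg _

lemma norm_restr_le_gaugeNorm {k : ℕ} (K : Finset (Fin d)) (hK : K.card ≤ k)
    (y : EuclideanSpace ℝ (Fin d)) : ‖restr K y‖ ≤ gaugeNorm k y :=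
  le_ciSup (f := fun K : {K : Finset (Fin d) // K.card ≤ k} => ‖restr (K : Finset (Fin d)) y‖)
    (Set.finite_range _).bddAbove ⟨K, hK⟩

lemma abs_le_gaugeNorm_one (y : EuclideanSpace ℝ (Fin d)) (i : Fin d) :
    |y i| ≤ gaugeNorm 1 y :=
  norm_restr_singleton i y ▸ norm_restr_le_gaugeNorm {i} (Finset.card_singleton i).le y

lemma gaugeNorm_le_of_abs_le_one {y : EuclideanSpace ℝ (Fin d)} (hy : ∀ i, |y i| ≤ 1)
    (k : ℕ) : gaugeNorm k y ≤ k :=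
  ciSup_le fun K => (norm_restr_le_card hy K).trans (by exact_mod_cast K.2)

lemma le_capraConjL0 (y : EuclideanSpace ℝ (Fin d)) (l : Fin (d + 1)) :
    gaugeNorm (l : ℕ) y - ((l : ℕ) : ℝ) ≤ capraConjL0 y :=
  le_ciSup (f := fun l : Fin (d + 1) => gaugeNorm (l : ℕ) y - ((l : ℕ) : ℝ))
    (Set.finite_range _).bddAbove l

lemma capraConjL0_nonneg (y : EuclideanSpace ℝ (Fin d)) : 0 ≤ capraConjL0 y :=
  (gaugeNorm_nonneg 0 y).trans (by simpa using le_capraConjL0 y 0)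

lemma abs_le_one_add_capraConjL0 (y : EuclideanSpace ℝ (Fin d)) (i : Fin d) :
    |y i| ≤ 1 + capraConjL0 y := by
  have hl := le_capraConjL0 y ⟨1, Nat.succ_lt_succ i.pos⟩
  simp only [Nat.cast_one] at hl
  linarith [abs_le_gaugeNorm_one y i]

lemma capraConjL0_nonpos_of_abs_le_one {y : EuclideanSpace ℝ (Fin d)} (hy : ∀ i, |y i| ≤ 1) :
    capraConjL0 y ≤ 0 :=
  ciSup_le fun l => sub_nonpos.mpr (gaugeNorm_le_of_abs_le_one hy l)

lemma inner_sub_capraConjL0_le {x : EuclideanSpace ℝ (Fin d)} (hx : ∑ i, |x i| ≤ 1)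
    (y : EuclideanSpace ℝ (Fin d)) : inner ℝ x y - capraConjL0 y ≤ ∑ i, |x i| := by
  set A := capraConjL0 y
  have hA : 0 ≤ A := capraConjL0_nonneg y
  have hterm : ∀ i, y i * x i ≤ |x i| * (1 + A) := fun i =>
    calc y i * x i ≤ |x i| * |y i| := by rw [mul_comm, ← abs_mul]; exact le_abs_self _
      _ ≤ |x i| * (1 + A) := by gcongr; exact abs_le_one_add_capraConjL0 y i
  have hholder : inner ℝ x y ≤ (∑ i, |x i|) * (1 + A) := by
    simpa [PiLp.inner_apply, Finset.sum_mul] using Finset.sum_le_sum fun i _ => hterm i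
  nlinarith [mul_le_mul_of_nonneg_right hx hA]

lemma inner_sign_eq_sum_abs (x : EuclideanSpace ℝ (Fin d)) :
    inner ℝ x (WithLp.toLp 2 fun i => (SignType.sign (x i) : ℝ)) = ∑ i, |x i| := by
  simp [PiLp.inner_apply, sign_mul_self]

theorem L0_eq_sum_abs {x : EuclideanSpace ℝ (Fin d)} (hx : ∑ i, |x i| ≤ 1) :
    L0 x = ((∑ i, |x i| : ℝ) : EReal) := by
  set s : EuclideanSpace ℝ (Fin d) := WithLp.toLp 2 fun i => (SignType.sign (x i) : ℝ)
  have hs : ∀ i, |s i| ≤ 1 := fun i => by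
    change |(SignType.sign (x i) : ℝ)| ≤ 1
    cases SignType.sign (x i) <;> simp
  refine le_antisymm (iSup_le fun y => EReal.coe_le_coe (inner_sub_capraConjL0_le hx y)) ?_
  refine le_iSup_of_le s (EReal.coe_le_coe ?_)
  linarith [inner_sign_eq_sum_abs x, capraConjL0_nonpos_of_abs_le_one hs]

theorem L0_formula_dim2_lozenge_general (x : EuclideanSpace ℝ (Fin 2))
    (h2 : |x 0| + |x 1| ≤ 1) :
    L0 x = ((|x 0| + |x 1| : ℝ) : EReal) := by
  rw [← Fin.sum_univ_two (f := fun i => |x i|)] at h2 ⊢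
  exact L0_eq_sum_abs h2

/-- in dimension `d = 2`, for `x` with `x₁² + x₂² < 1` and
`|x₁| + |x₂| ≤ 1`, one has `L₀(x₁,x₂) = |x₁| + |x₂|`. -/
theorem L0_formula_dim2_lozenge (x : EuclideanSpace ℝ (Fin 2))
    (h1 : (x 0) ^ 2 + (x 1) ^ 2 < 1) (h2 : |x 0| + |x 1| ≤ 1) :
    L0 x = ((|x 0| + |x 1| : ℝ) : EReal) :=
  L0_formula_dim2_lozenge_general x h2
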